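/- arXiv:2403.13483 — 3 statements merged into one kernel-verified Lean document; each statement's English description precedes it below -/
import Mathlib

section
/- If a countable group G admits a right-invariant Banach mean value (a linear functional M on bounded real functions with inf h ≤ M(h) ≤ sup h and M(x ↦ h(xa)) = M(h) for all a ∈ G), then G also admits a bi-invariant Banach mean value, i.e. one additionally satisfying M(x ↦ h(axb)) = M(h) for all a, b ∈ G. -/
/-- A right-invariant Banach mean value on a countable group yields a bi-invariant one. -/
theorem stmt0 {G : Type*} [Group G] [Countable G]
    (M : (G → ℝ) → ℝ)
    (hadd : ∀ h₁ h₂ : G → ℝ, M (h₁ + h₂) = M h₁ + M h₂)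
    (hsmul : ∀ (c : ℝ) (h : G → ℝ), M (c • h) = c * M h)
    (hbound : ∀ h : G → ℝ, Bornology.IsBounded (Set.range h) →
      sInf (Set.range h) ≤ M h ∧ M h ≤ sSup (Set.range h))
    (hright : ∀ (a : G) (h : G → ℝ), Bornology.IsBounded (Set.range h) →
      M (fun x => h (x * a)) = M h) :
    ∃ M' : (G → ℝ) → ℝ,
      (∀ h₁ h₂ : G → ℝ, M' (h₁ + h₂) = M' h₁ + M' h₂) ∧
      (∀ (c : ℝ) (h : G → ℝ), M' (c • h) = c * M' h) ∧
      (∀ h : G → ℝ, Bornology.IsBounded (Set.range h) →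
        sInf (Set.range h) ≤ M' h ∧ M' h ≤ sSup (Set.range h)) ∧
      (∀ (a b : G) (h : G → ℝ), Bornology.IsBounded (Set.range h) →
        M' (fun x => h (a * x * b)) = M' h) := by
  classical
  have hrangeR : ∀ (h : G → ℝ) (a : G), Set.range (fun x => h (x * a)) = Set.range h := by
    intro h a
    exact (Equiv.mulRight a).surjective.range_comp h
  have hrangeI : ∀ (h : G → ℝ), Set.range (fun x : G => h x⁻¹) = Set.range h := by
    intro h
    exact (Equiv.inv G).surjective.range_comp h
  -- the left-invariant mean
  set N : (G → ℝ) → ℝ := fun h => M (fun x => h x⁻¹) with hNdef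
  have Nadd : ∀ h₁ h₂ : G → ℝ, N (h₁ + h₂) = N h₁ + N h₂ := by
    intro h₁ h₂
    show M (fun x : G => (h₁ + h₂) x⁻¹) = _
    have : (fun x : G => (h₁ + h₂) x⁻¹) = (fun x : G => h₁ x⁻¹) + (fun x : G => h₂ x⁻¹) := by
      funext x; simp
    rw [this, hadd]
  have Nsmul : ∀ (c : ℝ) (h : G → ℝ), N (c • h) = c * N h := by
    intro c h
    show M (fun x : G => (c • h) x⁻¹) = _
    have : (fun x : G => (c • h) x⁻¹) = c • (fun x : G => h x⁻¹) := by
      funext x; simp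
    rw [this, hsmul]
  have Nbound : ∀ h : G → ℝ, Bornology.IsBounded (Set.range h) →
      sInf (Set.range h) ≤ N h ∧ N h ≤ sSup (Set.range h) := by
    intro h hb
    have := hbound (fun x : G => h x⁻¹) (by rw [hrangeI]; exact hb)
    rwa [hrangeI] at this
  have Nleft : ∀ (a : G) (h : G → ℝ), Bornology.IsBounded (Set.range h) →
      N (fun x => h (a * x)) = N h := by
    intro a h hb
    show M (fun x : G => h (a * x⁻¹)) = M (fun x : G => h x⁻¹)
    calc M (fun x : G => h (a * x⁻¹))
        = M (fun x : G => (fun z : G => h z⁻¹) (x * a⁻¹)) := by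
          congr 1; funext x; simp [mul_inv_rev]
      _ = M (fun z : G => h z⁻¹) := hright a⁻¹ _ (by rw [hrangeI]; exact hb)
  -- the combined mean
  set χ : (G → ℝ) → G → ℝ := fun h y => N (fun x => h (x * y)) with hχdef
  refine ⟨fun h => M (χ h), ?_, ?_, ?_, ?_⟩
  · intro h₁ h₂
    show M (χ (h₁ + h₂)) = M (χ h₁) + M (χ h₂)
    have : χ (h₁ + h₂) = χ h₁ + χ h₂ := by
      funext y
      show N (fun x => (h₁ + h₂) (x * y)) = _
      have : (fun x : G => (h₁ + h₂) (x * y))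
          = (fun x : G => h₁ (x * y)) + (fun x : G => h₂ (x * y)) := by
        funext x; simp
      rw [this, Nadd]; rfl
    rw [this, hadd]
  · intro c h
    show M (χ (c • h)) = c * M (χ h)
    have : χ (c • h) = c • χ h := by
      funext y
      show N (fun x => (c • h) (x * y)) = _
      have : (fun x : G => (c • h) (x * y)) = c • (fun x : G => h (x * y)) := by
        funext x; simp
      rw [this, Nsmul]; rfl
    rw [this, hsmul]
  · intro h hb
    have hne : (Set.range h).Nonempty := ⟨h 1, 1, rfl⟩
    have hpt : ∀ y : G, sInf (Set.range h) ≤ χ h y ∧ χ h y ≤ sSup (Set.range h) := by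
      intro y
      have hb' : Bornology.IsBounded (Set.range (fun x => h (x * y))) := by
        rw [hrangeR]; exact hb
      have := Nbound (fun x => h (x * y)) hb'
      rwa [hrangeR] at this
    have hχb : Bornology.IsBounded (Set.range (χ h)) := by
      apply Bornology.IsBounded.subset (Metric.isBounded_Icc (sInf (Set.range h)) (sSup (Set.range h)))
      rintro _ ⟨y, rfl⟩
      exact ⟨(hpt y).1, (hpt y).2⟩
    have hχne : (Set.range (χ h)).Nonempty := ⟨χ h 1, 1, rfl⟩
    have hM := hbound (χ h) hχb
    constructor
    · refine le_trans ?_ hM.1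
      exact le_csInf hχne (by rintro _ ⟨y, rfl⟩; exact (hpt y).1)
    · refine le_trans hM.2 ?_
      exact csSup_le hχne (by rintro _ ⟨y, rfl⟩; exact (hpt y).2)
  · intro a b h hb
    show M (χ (fun x => h (a * x * b))) = M (χ h)
    have key : (χ (fun x => h (a * x * b))) = fun y => χ h (y * b) := by
      funext y
      show N (fun x => h (a * (x * y) * b)) = N (fun x => h (x * (y * b)))
      have e1 : (fun x => h (a * (x * y) * b)) = fun x : G => (fun z : G => h (z * (y * b))) (a * x) := by
        funext x; show h (a * (x * y) * b) = h (a * x * (y * b)); congr 1; group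
      rw [e1]
      exact Nleft a (fun z : G => h (z * (y * b))) (by rw [hrangeR]; exact hb)
    have hχb : Bornology.IsBounded (Set.range (χ h)) := by
      have hpt : ∀ y : G, sInf (Set.range h) ≤ χ h y ∧ χ h y ≤ sSup (Set.range h) := by
        intro y
        have hb' : Bornology.IsBounded (Set.range (fun x => h (x * y))) := by
          rw [hrangeR]; exact hb
        have := Nbound (fun x => h (x * y)) hb'
        rwa [hrangeR] at this
      apply Bornology.IsBounded.subset (Metric.isBounded_Icc (sInf (Set.range h)) (sSup (Set.range h)))
      rintro _ ⟨y, rfl⟩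
      exact ⟨(hpt y).1, (hpt y).2⟩
    rw [key]
    exact hright b (χ h) hχb
end

section
/- Let R : G → [0, ∞) be in ℓ²(G) with ‖R‖₂ = 1 and write its square as a layered sum R²(·) = Σ_{i=1}^{p} λ_i 1_{A_i}(·) with λ_i > 0 and finite nested sets A_1 ⊆ A_2 ⊆ ... ⊆ A_p. Then for every h ∈ G, ‖R²(·) − R²(·h)‖_{ℓ¹(G)} = Σ_{i=1}^{p} λ_i |A_i △ A_i h⁻¹|. -/
/-- For a nonnegative `R ∈ ℓ²(G)` of norm 1 whose square is a layered sum
`R² = Σ_i λ_i 1_{A_i}` over nested finite sets, for every `h ∈ G`,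
`‖R²(·) − R²(·h)‖_{ℓ¹(G)} = Σ_i λ_i |A_i △ A_i h⁻¹|`. -/
theorem stmt10 {G : Type*} [Group G] [Countable G] [DecidableEq G]
    (R : G → ℝ) (hR0 : ∀ g, 0 ≤ R g) (hnorm : ∑' g, R g ^ 2 = 1)
    (p : ℕ) (lam : Fin p → ℝ) (hlam : ∀ i, 0 < lam i)
    (A : Fin p → Finset G) (hmono : Monotone A)
    (hlayer : ∀ g, R g ^ 2 = ∑ i, lam i * (if g ∈ A i then (1 : ℝ) else 0))
    (h : G) :
    ∑' g, |R g ^ 2 - R (g * h) ^ 2| =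
      ∑ i, lam i * ((symmDiff (A i) ((A i).image (fun a => a * h⁻¹))).card : ℝ) := by
  classical
  set sd : Fin p → Finset G := fun i => symmDiff (A i) ((A i).image (fun a => a * h⁻¹)) with hsd
  have hmem : ∀ (i : Fin p) (g : G), g ∈ (A i).image (fun a => a * h⁻¹) ↔ g * h ∈ A i := by
    intro i g
    constructor
    · rw [Finset.mem_image]
      rintro ⟨a, ha, rfl⟩; simpa using ha
    · intro hg
      rw [Finset.mem_image]
      exact ⟨g * h, hg, by group⟩
  have key : ∀ g, |R g ^ 2 - R (g * h) ^ 2|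
      = ∑ i, lam i * (if g ∈ sd i then (1 : ℝ) else 0) := by
    intro g
    set F : Fin p → ℝ := fun i =>
      lam i * ((if g ∈ A i then (1 : ℝ) else 0) - (if g * h ∈ A i then (1 : ℝ) else 0)) with hF
    have hsum : R g ^ 2 - R (g * h) ^ 2 = ∑ i, F i := by
      rw [hlayer g, hlayer (g * h), ← Finset.sum_sub_distrib]
      exact Finset.sum_congr rfl (by intro i _; simp [hF, mul_sub])
    have habs : ∀ i, |F i| = lam i * (if g ∈ sd i then (1 : ℝ) else 0) := by
      intro i
      rw [hF]
      by_cases h1 : g ∈ A i <;> by_cases h2 : g * h ∈ A i <;>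
        simp [hsd, Finset.mem_symmDiff, hmem i g, h1, h2, abs_of_pos (hlam i),
          abs_of_neg (neg_neg_iff_pos.mpr (hlam i))] <;> ring_nf <;>
        simp [abs_of_pos (hlam i)]
    have hsign : (∀ i, 0 ≤ F i) ∨ (∀ i, F i ≤ 0) := by
      by_contra hc
      push_neg at hc
      obtain ⟨⟨i, hi⟩, ⟨j, hj⟩⟩ := hc
      -- hi : F i < 0, hj : 0 < F j
      have hi' : g ∉ A i ∧ g * h ∈ A i := by
        by_cases h1 : g ∈ A i <;> by_cases h2 : g * h ∈ A i <;>
          simp [hF, h1, h2] at hi <;>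
          first
            | exact absurd hi (not_lt.mpr (hlam i).le)
            | exact ⟨h1, h2⟩
      have hj' : g ∈ A j ∧ g * h ∉ A j := by
        by_cases h1 : g ∈ A j <;> by_cases h2 : g * h ∈ A j <;>
          simp [hF, h1, h2] at hj <;>
          first
            | exact absurd hj (not_lt.mpr (hlam j).le)
            | exact ⟨h1, h2⟩
      rcases le_total i j with hij | hij
      · exact hj'.2 (hmono hij hi'.2)
      · exact hi'.1 (hmono hij hj'.1)
    rw [hsum]
    rcases hsign with hs | hs
    · rw [abs_of_nonneg (Finset.sum_nonneg fun i _ => hs i)]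
      exact Finset.sum_congr rfl fun i _ => by rw [← habs i, abs_of_nonneg (hs i)]
    · rw [abs_of_nonpos (Finset.sum_nonpos fun i _ => hs i), ← Finset.sum_neg_distrib]
      exact Finset.sum_congr rfl fun i _ => by rw [← habs i, abs_of_nonpos (hs i)]
  have hsummable : ∀ i : Fin p,
      Summable (fun g => lam i * (if g ∈ sd i then (1 : ℝ) else 0)) := by
    intro i
    apply summable_of_ne_finset_zero (s := sd i)
    intro g hg
    simp [hg]
  calc ∑' g, |R g ^ 2 - R (g * h) ^ 2|
      = ∑' g, ∑ i, lam i * (if g ∈ sd i then (1 : ℝ) else 0) := tsum_congr key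
    _ = ∑ i, ∑' g, lam i * (if g ∈ sd i then (1 : ℝ) else 0) :=
        Summable.tsum_finsetSum fun i _ => hsummable i
    _ = ∑ i, lam i * ((sd i).card : ℝ) := by
        refine Finset.sum_congr rfl fun i _ => ?_
        rw [tsum_eq_sum (s := sd i) (fun g hg => by simp [hg])]
        simp [Finset.sum_ite_mem, mul_comm]
end

section
/- Let G be a countable group and suppose that for every finite set K ⊆ G and every ε > 0 there exist finitely many nested finite sets A_1 ⊆ ... ⊆ A_p and weights λ_i > 0 with Σ λ_i|A_i| = 1 such that (1/2)·Σ_i λ_i Σ_{h∈K} |A_i △ A_i h⁻¹| ≤ ε. Then for every finite K ⊆ G and ε > 0 there exists a single finite set A ⊆ G with Σ_{h∈K} |A h △ A| ≤ 2ε|A|; i.e., G satisfies the Følner condition and hence is amenable. -/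
/-- If for every finite `K ⊆ G` and `ε > 0` there are nested finite sets `A_1 ⊆ ⋯ ⊆ A_p`
and weights `λ_i > 0` with `Σ λ_i|A_i| = 1` and
`(1/2)·Σ_i λ_i Σ_{h ∈ K} |A_i △ A_i h⁻¹| ≤ ε`, then `G` satisfies the Følner condition:
for every finite `K` and `ε > 0` there is a finite set `A` with
`Σ_{h ∈ K} |A h △ A| ≤ 2ε|A|`. -/
theorem stmt11 {G : Type*} [Group G] [Countable G] [DecidableEq G]
    (H : ∀ (K : Finset G) (ε : ℝ), 0 < ε →
      ∃ (p : ℕ) (lam : Fin p → ℝ) (A : Fin p → Finset G),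
        (∀ i, 0 < lam i) ∧ Monotone A ∧ (∀ i, (A i).Nonempty) ∧
        (∑ i, lam i * ((A i).card : ℝ)) = 1 ∧
        (1 / 2) * ∑ i, lam i *
            ∑ h ∈ K, ((symmDiff (A i) ((A i).image (fun a => a * h⁻¹))).card : ℝ) ≤ ε) :
    ∀ (K : Finset G) (ε : ℝ), 0 < ε →
      ∃ A : Finset G, A.Nonempty ∧
        (∑ h ∈ K, ((symmDiff (A.image (fun a => a * h)) A).card : ℝ)) ≤
          2 * ε * (A.card : ℝ) := by
  intro K ε hε
  obtain ⟨p, lam, A, hpos, hmono, hne, hsum, hbound⟩ := H K ε hε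
  -- the two symmetric-difference counts agree (translate by h)
  have key : ∀ i, ∑ h ∈ K, ((symmDiff ((A i).image (fun a => a * h)) (A i)).card : ℝ)
      = ∑ h ∈ K, ((symmDiff (A i) ((A i).image (fun a => a * h⁻¹))).card : ℝ) := by
    intro i
    refine Finset.sum_congr rfl fun h _ => ?_
    have hinj : Function.Injective (fun a : G => a * h) :=
      fun a b hab => by simpa using hab
    have himg : (((A i).image (fun a => a * h⁻¹)).image (fun a => a * h)) = A i := by
      rw [Finset.image_image]
      simp
    have : ((symmDiff (A i) ((A i).image (fun a => a * h⁻¹))).image (fun a => a * h))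
        = symmDiff ((A i).image (fun a => a * h)) (A i) := by
      rw [Finset.image_symmDiff _ _ hinj, himg]
    rw [← this, Finset.card_image_of_injective _ hinj]
  -- p > 0
  have hp : 0 < p := by
    rcases Nat.eq_zero_or_pos p with h0 | h0
    · subst h0; simpa using hsum
    · exact h0
  have huniv : (Finset.univ : Finset (Fin p)).Nonempty := ⟨⟨0, hp⟩, Finset.mem_univ _⟩
  by_contra hcon
  push_neg at hcon
  have hlt : ∀ i : Fin p,
      2 * ε * ((A i).card : ℝ) <
        ∑ h ∈ K, ((symmDiff (A i) ((A i).image (fun a => a * h⁻¹))).card : ℝ) := by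
    intro i
    rw [← key i]
    exact hcon (A i) (hne i)
  have hstrict : 2 * ε * ∑ i, lam i * ((A i).card : ℝ)
      < ∑ i, lam i * ∑ h ∈ K, ((symmDiff (A i) ((A i).image (fun a => a * h⁻¹))).card : ℝ) := by
    rw [Finset.mul_sum]
    refine Finset.sum_lt_sum_of_nonempty huniv fun i _ => ?_
    have := mul_lt_mul_of_pos_left (hlt i) (hpos i)
    calc 2 * ε * (lam i * ((A i).card : ℝ)) = lam i * (2 * ε * ((A i).card : ℝ)) := by ring
    _ < _ := this
  rw [hsum] at hstrict
  set S := ∑ i, lam i *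
      ∑ h ∈ K, ((symmDiff (A i) ((A i).image (fun a => a * h⁻¹))).card : ℝ) with hS
  linarith
end
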